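/- Let x = (x_1, …, x_{n+m}) ∈ {0,1}^{n+m} be a fixed bit string with n, m ≥ 1, and let T be a uniformly random subset of {1, …, n+m} of size m. Let Λ_T denote the fraction of ones among the positions in T and Λ_{T̄} the fraction of ones among the n positions outside T. Then for every μ > 0, the probability that Λ_{T̄} ≥ Λ_T + μ is at most exp(−(2 n m² μ²) / ((n + m)(m + 1))). In particular, taking μ = √(((n + m)(m + 1)) / (n m²) · ln(2/ε)) for ε ∈ (0,1), the probability that Λ_{T̄} ≥ Λ_T + μ is at most (ε/2)². -/

import Mathlib

/-!
The untested positions `Tᶜ` form a uniformly random `n`-subset of the `N = n + m`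
positions, and `Λ_{T̄} ≥ Λ_T + μ` says that the number of ones in `Tᶜ` exceeds its mean `nK/N`
(`K` the total number of ones) by `τ = nmμ/N`. Build the `n`-subset by adding a uniformly chosen
first element to a uniform subset of the rest: the centred count changes by a mean-zero increment
of range `m/j`, where `j` is the size of the remaining population, so by Hoeffding's lemma and
induction its moment generating function is at most `exp(t² ∑_{j=m}^{N-1} (m/j)² / 8)`. The sum
telescopes to at most `(m + 1)n/N`, and the Chernoff bound with the optimal `t` gives
`exp(-2τ²N/(n(m + 1)))`, which is the claimed bound.
-/

open Finset Real

open MeasureTheory ProbabilityTheory in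
/-- Hoeffding's lemma for the uniform distribution on `α`. -/
theorem sum_exp_mul_le_card_mul_exp_of_sum_eq_zero {α : Type*} [Fintype α] [Nonempty α]
    {y : α → ℝ} {a b : ℝ} (hy : ∀ i, y i ∈ Set.Icc a b) (hsum : ∑ i, y i = 0) (t : ℝ) :
    ∑ i, exp (t * y i) ≤ Fintype.card α * exp (t ^ 2 * (b - a) ^ 2 / 8) := by
  let _ : MeasurableSpace α := ⊤
  have : DiscreteMeasurableSpace α := ⟨fun _ => trivial⟩
  let μ := (PMF.uniformOfFintype α).toMeasure
  have hμ (f : α → ℝ) : ∫ i, f i ∂μ = (Fintype.card α : ℝ)⁻¹ * ∑ i, f i := by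
    simp [μ, PMF.integral_eq_sum, mul_sum]
  have hoeffding := (hasSubgaussianMGF_of_mem_Icc_of_integral_eq_zero (μ := μ)
    (measurable_of_countable y).aemeasurable (Filter.Eventually.of_forall hy)
    (by rw [hμ, hsum, mul_zero])).mgf_le t
  have hcard : (0 : ℝ) < Fintype.card α := by exact_mod_cast Fintype.card_pos
  rw [mgf, hμ, inv_mul_le_iff₀ hcard] at hoeffding
  refine hoeffding.trans_eq ?_
  simp only [NNReal.coe_pow, NNReal.coe_div, NNReal.coe_ofNat, coe_nnnorm, norm_eq_abs, div_pow,
    sq_abs]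
  congr 2
  ring

theorem sum_Ico_div_sq_le {D : ℕ} (hD : 0 < D) (n : ℕ) :
    ∑ j ∈ Ico D (n + D), ((D : ℝ) / j) ^ 2 ≤ (D + 1) * n / (n + D) := by
  have hDpos : (0 : ℝ) < D := by exact_mod_cast hD
  -- For `D ≤ j`, `(D / j) ^ 2 ≤ D (D + 1) (1 / j - 1 / (j + 1))`, which telescopes.
  calc ∑ j ∈ Ico D (n + D), ((D : ℝ) / j) ^ 2
      ≤ ∑ j ∈ Ico D (n + D), D * (D + 1) * (-(1 / ((j + 1 : ℕ) : ℝ)) - -(1 / (j : ℝ))) := by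
        refine sum_le_sum fun j hj => ?_
        have hDj : (D : ℝ) ≤ j := by exact_mod_cast (mem_Ico.mp hj).1
        have hj : (0 : ℝ) < j := hDpos.trans_le hDj
        push_cast
        rw [div_pow, div_le_iff₀ (by positivity)]
        field_simp
        nlinarith
    _ = (D + 1) * n / (n + D) := by
        rw [← mul_sum, sum_Ico_sub (fun j : ℕ => -(1 / (j : ℝ))) (by omega)]
        push_cast
        field_simp
        ring

namespace Finset
variable {ι : Type*} [DecidableEq ι]

theorem sum_sum_powersetCard_erase_insert {β : Type*} [AddCommMonoid β] (s : Finset ι) (n : ℕ)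
    (g : Finset ι → β) :
    ∑ a ∈ s, ∑ B ∈ (s.erase a).powersetCard n, g (insert a B) =
      (n + 1) • ∑ A ∈ s.powersetCard (n + 1), g A := by
  calc ∑ a ∈ s, ∑ B ∈ (s.erase a).powersetCard n, g (insert a B)
      = ∑ a ∈ s, ∑ A ∈ s.powersetCard (n + 1) with a ∈ A, g A := by
        refine sum_congr rfl fun a ha => sum_nbij' (insert a) (fun A => A.erase a) ?_ ?_ ?_ ?_ ?_
        · intro B hB
          simp only [mem_filter, mem_powersetCard] at hB ⊢
          have haB : a ∉ B := fun h => by simpa using hB.1 h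
          refine ⟨⟨insert_subset ha (hB.1.trans (erase_subset a s)), ?_⟩, mem_insert_self a B⟩
          rw [card_insert_of_notMem haB, hB.2]
        · intro A hA
          simp only [mem_filter, mem_powersetCard] at hA ⊢
          exact ⟨erase_subset_erase a hA.1.1, by rw [card_erase_of_mem hA.2, hA.1.2]; rfl⟩
        · intro B hB
          exact erase_insert fun h => by simpa using (mem_powersetCard.mp hB).1 h
        · intro A hA
          exact insert_erase (mem_filter.mp hA).2
        · intro B _
          rfl
    _ = ∑ A ∈ s.powersetCard (n + 1), ∑ _a ∈ A, g A :=
        sum_comm' fun a A => by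
          simp only [mem_filter, mem_powersetCard]
          exact ⟨fun ⟨_, hA, haA⟩ => ⟨haA, hA⟩, fun ⟨haA, hA⟩ => ⟨hA.1 haA, hA, haA⟩⟩
    _ = (n + 1) • ∑ A ∈ s.powersetCard (n + 1), g A := by
        rw [smul_sum]
        refine sum_congr rfl fun A hA => ?_
        rw [sum_const, (mem_powersetCard.mp hA).2]

end Finset

theorem card_filter_le_sum_exp {α : Type*} (s : Finset α) (f : α → ℝ) (a : ℝ) {t : ℝ}
    (ht : 0 ≤ t) : (#{x ∈ s | a ≤ f x} : ℝ) ≤ ∑ x ∈ s, exp (t * (f x - a)) := by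
  rw [card_filter, Nat.cast_sum]
  refine sum_le_sum fun x _ => ?_
  split_ifs with h
  · exact_mod_cast one_le_exp (mul_nonneg ht (sub_nonneg.mpr h))
  · exact_mod_cast (exp_pos _).le

section Sampling

variable {ι : Type*} [DecidableEq ι]

/-- For `#s = n + 1 + D`, the centred count `#(A ∩ M) - #A * #M / #s` of `A = insert a B ⊆ s`
exceeds that of the `n`-subset `B` of `s.erase a` by this amount (`card_insert_inter_sub_eq`). -/
noncomputable def centredIncrement (s M : Finset ι) (n D : ℕ) (a : ι) : ℝ :=
  (if a ∈ M then (D : ℝ) / (n + D) else 0) + #M * (n / (n + D) - (n + 1) / #s)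

theorem card_insert_inter_sub_eq {s M B : Finset ι} {a : ι} (ha : a ∈ s) (haB : a ∉ B)
    {n D : ℕ} (hD : 0 < D) (hs : #s = n + 1 + D) :
    (#(insert a B ∩ M) : ℝ) - (n + 1) * #M / #s =
      (#(B ∩ M.erase a) - n * #(M.erase a) / #(s.erase a)) + centredIncrement s M n D a := by
  have hN : (#s : ℝ) = n + 1 + D := by exact_mod_cast hs
  have hBM : B ∩ M.erase a = B ∩ M := by
    rw [inter_erase, erase_eq_of_notMem fun h => haB (mem_inter.mp h).1]
  have hsa : (#(s.erase a) : ℝ) = n + D := by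
    rw [card_erase_of_mem ha, Nat.cast_sub (card_pos.mpr ⟨a, ha⟩), hN]
    ring
  rw [hBM, hsa, centredIncrement, hN]
  by_cases haM : a ∈ M
  · have hMa : (#(M.erase a) : ℝ) = #M - 1 := by
      rw [card_erase_of_mem haM, Nat.cast_sub (card_pos.mpr ⟨a, haM⟩), Nat.cast_one]
    rw [insert_inter_of_mem haM, card_insert_of_notMem (fun h => haB (mem_inter.mp h).1), hMa,
      if_pos haM]
    push_cast
    field_simp
    ring
  · rw [insert_inter_of_notMem haM, erase_eq_of_notMem haM, if_neg haM]
    field_simp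
    ring

theorem sum_exp_mul_centredIncrement_le {s M : Finset ι} (hM : M ⊆ s) {n D : ℕ} (hD : 0 < D)
    (hs : #s = n + 1 + D) (t : ℝ) :
    ∑ a ∈ s, exp (t * centredIncrement s M n D a) ≤
      #s * exp (t ^ 2 * (D / (n + D)) ^ 2 / 8) := by
  have hN : (#s : ℝ) = n + 1 + D := by exact_mod_cast hs
  set c : ℝ := #M * (n / (n + D) - (n + 1) / #s)
  have hsum : ∑ a ∈ s, centredIncrement s M n D a = 0 := by
    simp only [centredIncrement, sum_add_distrib, sum_ite_mem, inter_eq_right.mpr hM, sum_const,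
      nsmul_eq_mul, hN]
    field_simp
    ring
  have hmem : ∀ a, centredIncrement s M n D a ∈ Set.Icc c (D / (n + D) + c) := by
    intro a
    by_cases haM : a ∈ M <;> simp [centredIncrement, c, haM] <;> positivity
  have : Nonempty s := (card_pos.mp (by omega)).to_subtype
  rw [← sum_coe_sort, ← Fintype.card_coe]
  convert sum_exp_mul_le_card_mul_exp_of_sum_eq_zero (fun a : s => hmem a)
    (by rwa [sum_coe_sort]) t using 4
  ring

theorem mul_sum_exp_mul_card_inter_sub_succ_le {s M : Finset ι} (hM : M ⊆ s) {n D : ℕ}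
    (hD : 0 < D) (hs : #s = n + 1 + D) (t C : ℝ)
    (hC : ∀ a ∈ s, ∑ B ∈ (s.erase a).powersetCard n,
      exp (t * (#(B ∩ M.erase a) - n * #(M.erase a) / #(s.erase a))) ≤ C) :
    (n + 1) * ∑ A ∈ s.powersetCard (n + 1), exp (t * (#(A ∩ M) - (n + 1) * #M / #s)) ≤
      #s * C * exp (t ^ 2 * (D / (n + D)) ^ 2 / 8) := by
  calc (n + 1) * ∑ A ∈ s.powersetCard (n + 1), exp (t * (#(A ∩ M) - (n + 1) * #M / #s))
      = ∑ a ∈ s, ∑ B ∈ (s.erase a).powersetCard n,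
          exp (t * (#(B ∩ M.erase a) - n * #(M.erase a) / #(s.erase a))) *
            exp (t * centredIncrement s M n D a) := by
        rw [← Nat.cast_add_one, ← nsmul_eq_mul, ← sum_sum_powersetCard_erase_insert]
        refine sum_congr rfl fun a ha => sum_congr rfl fun B hB => ?_
        have haB : a ∉ B := fun h => by simpa using (mem_powersetCard.mp hB).1 h
        rw [Nat.cast_add_one, card_insert_inter_sub_eq ha haB hD hs, ← exp_add, mul_add]
    _ ≤ ∑ a ∈ s, C * exp (t * centredIncrement s M n D a) := by
        refine sum_le_sum fun a ha => ?_
        rw [← sum_mul]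
        exact mul_le_mul_of_nonneg_right (hC a ha) (exp_nonneg _)
    _ = C * ∑ a ∈ s, exp (t * centredIncrement s M n D a) := (mul_sum _ _ _).symm
    _ ≤ C * (#s * exp (t ^ 2 * (D / (n + D)) ^ 2 / 8)) := by
        obtain ⟨a, ha⟩ := card_pos.mp (show 0 < #s by omega)
        have hC0 : 0 ≤ C := (sum_nonneg fun _ _ => (exp_pos _).le).trans (hC a ha)
        exact mul_le_mul_of_nonneg_left (sum_exp_mul_centredIncrement_le hM hD hs t) hC0
    _ = #s * C * exp (t ^ 2 * (D / (n + D)) ^ 2 / 8) := by ring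

theorem sum_exp_mul_card_inter_sub_le {D : ℕ} (hD : 0 < D) (n : ℕ) {s M : Finset ι}
    (hM : M ⊆ s) (hs : #s = n + D) (t : ℝ) :
    ∑ A ∈ s.powersetCard n, exp (t * (#(A ∩ M) - n * #M / #s)) ≤
      (#s).choose n * exp (t ^ 2 * (∑ j ∈ Ico D (n + D), ((D : ℝ) / j) ^ 2) / 8) := by
  induction n generalizing s M with
  | zero => simp
  | succ n ih =>
    have hstep := mul_sum_exp_mul_card_inter_sub_succ_le hM hD hs t
      ((n + D).choose n * exp (t ^ 2 * (∑ j ∈ Ico D (n + D), ((D : ℝ) / j) ^ 2) / 8))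
      fun a ha => by
        have hsa : #(s.erase a) = n + D := by rw [card_erase_of_mem ha, hs]; omega
        exact (ih (erase_subset_erase a hM) hsa).trans_eq (by rw [hsa])
    have hchoose : (#s : ℝ) * (n + D).choose n = (n + 1) * (#s).choose (n + 1) := by
      rw [hs, show n + 1 + D = n + D + 1 by omega]
      exact_mod_cast (Nat.add_one_mul_choose_eq (n + D) n).trans (mul_comm _ _)
    have hsum : ∑ j ∈ Ico D (n + 1 + D), ((D : ℝ) / j) ^ 2 =
        ∑ j ∈ Ico D (n + D), ((D : ℝ) / j) ^ 2 + (D / (n + D)) ^ 2 := by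
      rw [show n + 1 + D = n + D + 1 by omega, sum_Ico_succ_top (by omega)]
      push_cast
      rfl
    rw [Nat.cast_add_one]
    refine le_of_mul_le_mul_left (hstep.trans_eq ?_) (by positivity : (0 : ℝ) < n + 1)
    rw [hsum, mul_add (t ^ 2), add_div, exp_add]
    linear_combination (exp (t ^ 2 * (∑ j ∈ Ico D (n + D), ((D : ℝ) / j) ^ 2) / 8) *
      exp (t ^ 2 * (D / (n + D)) ^ 2 / 8)) * hchoose

theorem card_filter_add_le_card_inter_le {n D : ℕ} (hn : 0 < n) (hD : 0 < D) {s M : Finset ι}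
    (hM : M ⊆ s) (hs : #s = n + D) {τ : ℝ} (hτ : 0 ≤ τ) :
    (#{A ∈ s.powersetCard n | n * #M / #s + τ ≤ #(A ∩ M)} : ℝ) ≤
      (#s).choose n * exp (-2 * τ ^ 2 * #s / (n * (D + 1))) := by
  have hN : (#s : ℝ) = n + D := by exact_mod_cast hs
  -- `t` minimises `t ^ 2 * n * (D + 1) / (8 * #s) - t * τ`.
  set t : ℝ := 4 * τ * #s / (n * (D + 1))
  have ht : 0 ≤ t := by positivity
  calc (#{A ∈ s.powersetCard n | n * #M / #s + τ ≤ #(A ∩ M)} : ℝ)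
      ≤ ∑ A ∈ s.powersetCard n, exp (t * (#(A ∩ M) - (n * #M / #s + τ))) :=
        card_filter_le_sum_exp _ _ _ ht
    _ = (∑ A ∈ s.powersetCard n, exp (t * (#(A ∩ M) - n * #M / #s))) * exp (-(t * τ)) := by
        rw [sum_mul]
        refine sum_congr rfl fun A _ => ?_
        rw [← exp_add]
        ring_nf
    _ ≤ (#s).choose n * exp (t ^ 2 * (∑ j ∈ Ico D (n + D), ((D : ℝ) / j) ^ 2) / 8) *
          exp (-(t * τ)) :=
        mul_le_mul_of_nonneg_right (sum_exp_mul_card_inter_sub_le hD n hM hs t) (exp_nonneg _)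
    _ ≤ (#s).choose n * exp (t ^ 2 * ((D + 1) * n / (n + D)) / 8) * exp (-(t * τ)) := by
        gcongr
        exact sum_Ico_div_sq_le hD n
    _ = (#s).choose n * exp (-2 * τ ^ 2 * #s / (n * (D + 1))) := by
        rw [mul_assoc, ← exp_add]
        congr 2
        simp only [t, hN]
        field_simp
        ring

end Sampling

theorem card_filter_powersetCard_compl {α : Type*} [Fintype α] [DecidableEq α] {m n : ℕ}
    (h : m + n = Fintype.card α) (p : Finset α → Prop) [DecidablePred p] :
    #{T ∈ univ.powersetCard m | p Tᶜ} = #{A ∈ univ.powersetCard n | p A} := by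
  refine card_nbij' (·ᶜ) (·ᶜ) ?_ ?_ (fun T _ => compl_compl T) (fun A _ => compl_compl A)
  · intro T hT
    simp only [coe_filter, mem_powersetCard, subset_univ, true_and, Set.mem_ofPred_eq] at hT ⊢
    exact ⟨by rw [card_compl, hT.1]; omega, hT.2⟩
  · intro A hA
    simp only [coe_filter, mem_powersetCard, subset_univ, true_and, Set.mem_ofPred_eq,
      compl_compl] at hA ⊢
    exact ⟨by rw [card_compl, hA.1]; omega, hA.2⟩

theorem card_filter_card_inter_div_add_le {α : Type*} [Fintype α] [DecidableEq α]
    (M : Finset α) {n m : ℕ} (hn : 0 < n) (hm : 0 < m) (hα : Fintype.card α = n + m) {μ : ℝ}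
    (hμ : 0 ≤ μ) :
    (#{T ∈ univ.powersetCard m | (#(T ∩ M) : ℝ) / m + μ ≤ #(Tᶜ ∩ M) / n} : ℝ) ≤
      (n + m).choose m * exp (-(2 * n * m ^ 2 * μ ^ 2) / ((n + m) * (m + 1))) := by
  have hN : (#(univ : Finset α) : ℝ) = n + m := by rw [card_univ, hα]; push_cast; rfl
  set τ : ℝ := n * m * μ / (n + m)
  have hevent : ∀ A : Finset α, ((#(Aᶜ ∩ M) : ℝ) / m + μ ≤ #(A ∩ M) / n ↔
      n * #M / #(univ : Finset α) + τ ≤ #(A ∩ M)) := by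
    intro A
    have hsplit : (#(Aᶜ ∩ M) : ℝ) = #M - #(A ∩ M) := by
      rw [inter_comm Aᶜ, ← sdiff_eq_inter_compl, inter_comm A, eq_sub_iff_add_eq, ← Nat.cast_add,
        add_comm, card_inter_add_card_sdiff]
    have hgap : (#(A ∩ M) : ℝ) / n - ((#M - #(A ∩ M)) / m + μ) =
        (n + m) / (n * m) * (#(A ∩ M) - (n * #M / (n + m) + τ)) := by
      simp only [τ]
      field_simp
      ring
    rw [hsplit, hN, ← sub_nonneg, hgap, mul_nonneg_iff_of_pos_left (by positivity), sub_nonneg]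
  have hcount := card_filter_powersetCard_compl (by omega : m + n = Fintype.card α)
    fun A => (#(Aᶜ ∩ M) : ℝ) / m + μ ≤ #(A ∩ M) / n
  simp only [compl_compl] at hcount
  rw [hcount, filter_congr fun A _ => hevent A]
  calc _ ≤ (#(univ : Finset α)).choose n * exp (-2 * τ ^ 2 * #(univ : Finset α) / (n * (m + 1))) :=
        card_filter_add_le_card_inter_le hn hm (subset_univ M) (by rw [card_univ, hα])
          (by positivity)
    _ = (n + m).choose m * exp (-(2 * n * m ^ 2 * μ ^ 2) / ((n + m) * (m + 1))) := by
        rw [card_univ, hα, Nat.choose_symm_add]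
        congr 2
        simp only [τ]
        push_cast
        field_simp

/-- Serfling-type random-sampling-without-replacement bound.
For a fixed bit string `x ∈ {0,1}^(n+m)` and a uniformly random subset `T` of size `m`,
the probability (counting fraction over all size-`m` subsets) that the fraction of ones
outside `T` exceeds the fraction of ones in `T` by at least `μ` is at most
`exp(-(2 n m² μ²) / ((n + m)(m + 1)))`; with
`μ = √(((n + m)(m + 1)) / (n m²) · ln(2/ε))` this bound is `(ε/2)²`. -/
theorem serfling_sampling_bound
    (n m : ℕ) (hn : 1 ≤ n) (hm : 1 ≤ m)
    (x : Fin (n + m) → Bool)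
    -- fraction of ones among the positions of a subset `T` of the test set,
    -- and among its complement
    (ΛT ΛTc : Finset (Fin (n + m)) → ℝ)
    (hΛT : ∀ T, ΛT T = ((T.filter fun i => x i = true).card : ℝ) / m)
    (hΛTc : ∀ T, ΛTc T = ((Tᶜ.filter fun i => x i = true).card : ℝ) / n) :
    (∀ μ : ℝ, 0 < μ →
      ((((univ : Finset (Fin (n + m))).powersetCard m).filter
          fun T => ΛTc T ≥ ΛT T + μ).card : ℝ) /
        (((univ : Finset (Fin (n + m))).powersetCard m).card : ℝ) ≤
        Real.exp (-(2 * n * (m : ℝ) ^ 2 * μ ^ 2) / (((n : ℝ) + m) * (m + 1)))) ∧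
    (∀ ε : ℝ, ε ∈ Set.Ioo (0 : ℝ) 1 →
      ((((univ : Finset (Fin (n + m))).powersetCard m).filter
          fun T => ΛTc T ≥ ΛT T +
            Real.sqrt ((((n : ℝ) + m) * (m + 1)) / (n * (m : ℝ) ^ 2) *
              Real.log (2 / ε))).card : ℝ) /
        (((univ : Finset (Fin (n + m))).powersetCard m).card : ℝ) ≤ (ε / 2) ^ 2) := by
  refine (and_iff_left_of_imp fun htail ε ⟨hε0, hε1⟩ => ?_).mpr fun μ hμ => ?_
  · rw [card_powersetCard, card_univ, Fintype.card_fin,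
      div_le_iff₀ (by exact_mod_cast Nat.choose_pos (by omega)), mul_comm]
    refine Eq.trans_le ?_ (card_filter_card_inter_div_add_le {i | x i = true} (by omega)
      (by omega) (Fintype.card_fin _) hμ.le)
    congr 2
    refine filter_congr fun T _ => ?_
    rw [hΛT, hΛTc, ge_iff_le, inter_filter, inter_filter, inter_univ, inter_univ]
  · have hlog : 0 < log (2 / ε) := log_pos (by rw [lt_div_iff₀ hε0]; linarith)
    have harg : 0 < ((n + m) * (m + 1)) / (n * (m : ℝ) ^ 2) * log (2 / ε) := by positivity
    refine (htail _ (sqrt_pos.mpr harg)).trans_eq ?_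
    have hexponent : -(2 * n * (m : ℝ) ^ 2 * ((n + m) * (m + 1) / (n * m ^ 2) * log (2 / ε))) /
        ((n + m) * (m + 1)) = log ((ε / 2) ^ 2) := by
      rw [log_pow, log_div hε0.ne' two_ne_zero, log_div two_ne_zero hε0.ne']
      field_simp
      push_cast
      ring
    rw [sq_sqrt harg.le, hexponent, exp_log (by positivity)]
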